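/- arXiv:1910.00241 — 2 statements merged into one kernel-verified Lean document; each statement's English description precedes it below -/
import Mathlib

section
/- (Merging principle) Let G be a Σ_k-labeled bidirected graph. Suppose nodes x and y belong to the same DSCC, and suppose for some 1 ≤ i ≤ k there are edges (x,u,ᾱ_i) ∈ E and (y,v,ᾱ_i) ∈ E. Then u and v belong to the same DSCC. -/
/-- The Dyck alphabet `Σ_k`: `k` opening symbols `α_i` and `k` closing symbols `ᾱ_i`. -/
inductive DSym (k : ℕ) : Type
  | op (i : Fin k)
  | cl (i : Fin k)

/-- The Dyck language `𝓛_k`: the least set of words containing the empty word, closed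
under concatenation and under wrapping with a matched pair of parentheses. -/
inductive Dyck {k : ℕ} : List (DSym k) → Prop
  | nil : Dyck []
  | concat {w₁ w₂ : List (DSym k)} : Dyck w₁ → Dyck w₂ → Dyck (w₁ ++ w₂)
  | wrap {w : List (DSym k)} (i : Fin k) : Dyck w → Dyck (DSym.op i :: (w ++ [DSym.cl i]))

/-- `PathLabel E u v w` : there is a path from `u` to `v` in the `Σ_k`-labeled graph with
edge relation `E` (labels in `Σ_k ∪ {ε}`, with `ε = none`), whose label (ε contributing
the empty word) is `w`. -/
inductive PathLabel {V : Type} {k : ℕ} (E : V → V → Option (DSym k) → Prop) :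
    V → V → List (DSym k) → Prop
  | refl (u : V) : PathLabel E u u []
  | step {u v w : V} {l : Option (DSym k)} {s : List (DSym k)} :
      E u v l → PathLabel E v w s → PathLabel E u w (l.toList ++ s)

/-- `v` is Dyck-reachable from `u`. -/
def DyckReach {V : Type} {k : ℕ} (E : V → V → Option (DSym k) → Prop) (u v : V) : Prop :=
  ∃ w, PathLabel E u v w ∧ Dyck w

/-- A `Σ_k`-labeled graph is bidirected if ε-edges come in symmetric pairs and each
`α_i`-labeled edge is matched by a reverse `ᾱ_i`-labeled edge. -/
def Bidirected {V : Type} {k : ℕ} (E : V → V → Option (DSym k) → Prop) : Prop :=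
  (∀ u v, E u v none ↔ E v u none) ∧
  (∀ u v (i : Fin k), E u v (some (DSym.op i)) ↔ E v u (some (DSym.cl i)))


/-- Two nodes belong to the same DSCC iff each is Dyck-reachable from the other. -/
def SameDSCC {V : Type} {k : ℕ} (E : V → V → Option (DSym k) → Prop) (u v : V) : Prop :=
  DyckReach E u v ∧ DyckReach E v u

theorem PathLabel.trans {V : Type} {k : ℕ} {E : V → V → Option (DSym k) → Prop}
    {a b c : V} {w₁ w₂ : List (DSym k)} (h₁ : PathLabel E a b w₁)
    (h₂ : PathLabel E b c w₂) : PathLabel E a c (w₁ ++ w₂) := by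
  induction h₁ with
  | refl => simpa using h₂
  | step he _ ih => simpa using PathLabel.step he (ih h₂)

theorem PathLabel.single {V : Type} {k : ℕ} {E : V → V → Option (DSym k) → Prop}
    {a b : V} {s : DSym k} (h : E a b (some s)) : PathLabel E a b [s] := by
  simpa using PathLabel.step h (PathLabel.refl b)

theorem merge_aux {V : Type} {k : ℕ} {E : V → V → Option (DSym k) → Prop}
    {x y u v : V} (i : Fin k) (hxy : DyckReach E x y)
    (hux : E u x (some (DSym.op i))) (hyv : E y v (some (DSym.cl i))) :
    DyckReach E u v := by
  obtain ⟨w, hp, hd⟩ := hxy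
  refine ⟨DSym.op i :: (w ++ [DSym.cl i]), ?_, Dyck.wrap i hd⟩
  have := PathLabel.step hux (hp.trans (PathLabel.single hyv))
  simpa using this

/-- Merging principle: if `x` and `y` are in the same DSCC of a bidirected graph and
both have outgoing edges labeled with the same closing parenthesis `ᾱ_i`, leading to
`u` and `v` respectively, then `u` and `v` are in the same DSCC. -/
theorem merging_principle {V : Type} {k : ℕ} (hk : 1 ≤ k)
    (E : V → V → Option (DSym k) → Prop) (hbi : Bidirected E)
    {x y u v : V} (i : Fin k) (hxy : SameDSCC E x y)
    (hxu : E x u (some (DSym.cl i))) (hyv : E y v (some (DSym.cl i))) :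
    SameDSCC E u v := by
  have hux : E u x (some (DSym.op i)) := (hbi.2 u x i).mpr hxu
  have hvy : E v y (some (DSym.op i)) := (hbi.2 v y i).mpr hyv
  exact ⟨merge_aux i hxy.1 hux hyv, merge_aux i hxy.2 hvy hxu⟩
end

section
/- Let G = (V,E) be a directed graph and T a tree decomposition of G rooted at some bag. For every pair of nodes u, v ∈ V and every path P : u ⇝ v in G, the path P contains a node that belongs to the bag which is the lowest common ancestor in T of the root bag B_u of u and the root bag B_v of v. -/
/-- `EPath E u v l` : `l` is the list of nodes (in order, including both endpoints) of a
path from `u` to `v` in the directed graph with edge relation `E`. -/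
inductive EPath {V : Type} (E : V → V → Prop) : V → V → List V → Prop
  | refl (u : V) : EPath E u u [u]
  | step {u v w : V} {l : List V} : E u v → EPath E v w l → EPath E u w (u :: l)

/-- In a tree `T` rooted at `r`, the bag `a` is an ancestor of the bag `b` if `a` lies
on the (unique) path from `b` to the root `r`; equivalently (in a tree), `a` lies on
every walk from `b` to `r`. -/
def IsAncestor {ι : Type} (T : SimpleGraph ι) (r a b : ι) : Prop :=
  ∀ w : T.Walk b r, a ∈ w.support

/-!
If a path `P : u ⇝ v` avoided the bag `L`, then by (C2) and (C3) the bags meeting `P` would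
contain a walk of `T` from `B_u` to `B_v` avoiding `L`. In a rooted tree this is impossible
when `L` is the lowest common ancestor of `B_u` and `B_v`: the neighbours of `L` towards `B_u`
and towards `B_v` would be joined by a walk avoiding `L`, hence coincide since every edge of a
tree is a bridge, and this common neighbour would be a common ancestor one level below `L`.
-/

open SimpleGraph

namespace SimpleGraph

variable {ι : Type} {T : SimpleGraph ι}

theorem Connected.exists_walk_support_subset {S : Set ι} (hS : (T.induce S).Connected)
    {a b : ι} (ha : a ∈ S) (hb : b ∈ S) : ∃ w : T.Walk a b, ∀ x ∈ w.support, x ∈ S := by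
  obtain ⟨p⟩ := hS ⟨a, ha⟩ ⟨b, hb⟩
  refine ⟨p.map (Embedding.induce S).toHom, fun x hx => ?_⟩
  obtain ⟨y, -, rfl⟩ := List.mem_map.mp (p.support_map _ ▸ hx)
  exact y.2

theorem IsAcyclic.eq_of_adj_of_walk_notMem_support (hT : T.IsAcyclic) {c a b : ι}
    (ha : T.Adj c a) (hb : T.Adj c b) (p : T.Walk b a) (hc : c ∉ p.support) : a = b := by
  have hbridge :=
    isBridge_iff_forall_walk_mem_edges.mp (isAcyclic_iff_forall_adj_isBridge.mp hT ha) (.cons hb p)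
  rw [Walk.edges_cons, List.mem_cons, Sym2.eq_iff] at hbridge
  rcases hbridge with (⟨-, h⟩ | ⟨h, -⟩) | h
  · exact h
  · exact absurd h hb.ne
  · exact absurd (p.fst_mem_support_of_mem_edges h) hc

theorem IsAcyclic.isAncestor_of_mem_support (hT : T.IsAcyclic) {r a b : ι} {p : T.Walk b r}
    (hp : p.IsPath) (ha : a ∈ p.support) : IsAncestor T r a b := by
  classical
  intro w
  have hpw : p = w.toPath := congrArg Subtype.val ((hT.subsingleton_path b r).elim ⟨p, hp⟩ _)
  exact w.support_toPath_subset_support (hpw ▸ ha)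

theorem IsAncestor.of_walk_notMem_support {r a b c : ι} (h : IsAncestor T r a b)
    (p : T.Walk c b) (ha : a ∉ p.support) : IsAncestor T r a c := fun w => by
  have := h (p.reverse.append w)
  rw [Walk.mem_support_append_iff, Walk.support_reverse, List.mem_reverse] at this
  exact this.resolve_left ha

theorem IsAncestor.dist_lt (hT : T.Connected) {r a b : ι} (h : IsAncestor T r a b)
    (hab : a ≠ b) : T.dist a r < T.dist b r := by
  classical
  obtain ⟨p, hp⟩ := hT.exists_walk_length_eq_dist b r
  have ha := h p
  have hsplit := congrArg Walk.length (p.take_spec ha)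
  have htake : (p.takeUntil a ha).length ≠ 0 :=
    fun h0 => hab (Walk.eq_of_length_eq_zero h0).symm
  have hdrop : T.dist a r ≤ (p.dropUntil a ha).length := dist_le _
  rw [Walk.length_append] at hsplit
  omega

theorem IsAncestor.exists_adj_isAncestor (hT : T.IsTree) {r a b : ι} (h : IsAncestor T r a b)
    (hab : a ≠ b) : ∃ c, T.Adj a c ∧ IsAncestor T r c b ∧ ∃ p : T.Walk c b, a ∉ p.support := by
  classical
  obtain ⟨P, hP, -⟩ := hT.existsUnique_path b r
  have haP := h P
  obtain ⟨c, hac, p, hp⟩ := Walk.exists_eq_cons_of_ne hab (P.takeUntil a haP).reverse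
  have hpath : (Walk.cons hac p).IsPath := hp ▸ (hP.takeUntil haP).reverse
  refine ⟨c, hac, hT.isAcyclic.isAncestor_of_mem_support hP ?_, p,
    ((Walk.cons_isPath_iff _ _).mp hpath).2⟩
  apply P.support_takeUntil_subset_support haP
  rw [← List.mem_reverse, ← Walk.support_reverse, hp]
  exact List.mem_cons_of_mem _ p.start_mem_support

theorem IsTree.mem_support_of_isLowestCommonAncestor (hT : T.IsTree) {r L a b : ι}
    (ha : IsAncestor T r L a) (hb : IsAncestor T r L b)
    (hmax : ∀ L', IsAncestor T r L' a → IsAncestor T r L' b → T.dist L' r ≤ T.dist L r)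
    (w : T.Walk a b) : L ∈ w.support := by
  by_contra hw
  have haL : L ≠ a := fun h => hw (h ▸ w.start_mem_support)
  have hbL : L ≠ b := fun h => hw (h ▸ w.end_mem_support)
  obtain ⟨c, hLc, hca, pa, hpa⟩ := ha.exists_adj_isAncestor hT haL
  obtain ⟨d, hLd, hdb, pb, hpb⟩ := hb.exists_adj_isAncestor hT hbL
  have hcd : c = d := by
    refine hT.isAcyclic.eq_of_adj_of_walk_notMem_support hLc hLd
      (pb.append (w.reverse.append pa.reverse)) ?_
    simp only [Walk.mem_support_append_iff, Walk.support_reverse, List.mem_reverse]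
    tauto
  subst hcd
  have hdeeper : T.dist L r < T.dist c r :=
    (ha.of_walk_notMem_support pa hpa).dist_lt hT.connected hLc.ne
  exact (hmax c hca hdb).not_gt hdeeper

end SimpleGraph

theorem EPath.exists_walk_forall_exists_mem_bags {V ι : Type} {E : V → V → Prop}
    {T : SimpleGraph ι} {bags : ι → Set V}
    (hC2 : ∀ x y : V, E x y → ∃ b : ι, x ∈ bags b ∧ y ∈ bags b)
    (hC3 : ∀ x : V, (T.induce {b : ι | x ∈ bags b}).Connected)
    {u v : V} {l : List V} (hP : EPath E u v l) {b₁ b₂ : ι}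
    (h₁ : u ∈ bags b₁) (h₂ : v ∈ bags b₂) :
    ∃ w : T.Walk b₁ b₂, ∀ x ∈ w.support, ∃ z ∈ l, z ∈ bags x := by
  induction hP generalizing b₁ with
  | refl u =>
    obtain ⟨w, hw⟩ := (hC3 u).exists_walk_support_subset h₁ h₂
    exact ⟨w, fun x hx => ⟨u, List.mem_singleton_self u, hw x hx⟩⟩
  | @step u u' v l' huu' _ ih =>
    obtain ⟨b, hub, hu'b⟩ := hC2 u u' huu'
    obtain ⟨w₁, hw₁⟩ := (hC3 u).exists_walk_support_subset h₁ hub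
    obtain ⟨w₂, hw₂⟩ := ih hu'b h₂
    refine ⟨w₁.append w₂, fun x hx => ?_⟩
    rw [Walk.mem_support_append_iff] at hx
    rcases hx with hx | hx
    · exact ⟨u, List.mem_cons_self, hw₁ x hx⟩
    · obtain ⟨z, hz, hzx⟩ := hw₂ x hx
      exact ⟨z, List.mem_cons_of_mem u hz, hzx⟩

theorem treeDecomposition_lca_general {V ι : Type} (E : V → V → Prop)
    (T : SimpleGraph ι) (hT : T.IsTree) (bags : ι → Set V)
    (hC2 : ∀ x y : V, E x y → ∃ b : ι, x ∈ bags b ∧ y ∈ bags b)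
    (hC3 : ∀ x : V, (T.induce {b : ι | x ∈ bags b}).Connected)
    (r : ι) {u v : V} (Bu Bv L : ι)
    (hBu : u ∈ bags Bu)
    (hBv : v ∈ bags Bv)
    (hLu : IsAncestor T r L Bu) (hLv : IsAncestor T r L Bv)
    (hLMax : ∀ L' : ι, IsAncestor T r L' Bu → IsAncestor T r L' Bv →
      T.dist L' r ≤ T.dist L r)
    {l : List V} (hP : EPath E u v l) :
    ∃ z ∈ l, z ∈ bags L := by
  obtain ⟨w, hw⟩ := hP.exists_walk_forall_exists_mem_bags hC2 hC3 hBu hBv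
  exact hw L (hT.mem_support_of_isLowestCommonAncestor hLu hLv hLMax w)

/-- Let `T` (a tree on `ι`, rooted at the bag `r`, with bags `bags b ⊆ V` satisfying
conditions C1, C2, C3) be a tree decomposition of the directed graph `(V, E)`. The level
of a bag is its distance from the root. Let `Bu` be the root bag of `u` (a bag of
minimal level containing `u`), `Bv` the root bag of `v`, and `L` the lowest common
ancestor of `Bu` and `Bv` (a common ancestor of maximal level). Then every path
`P : u ⇝ v` in `G` contains a node belonging to the bag `L`. -/
theorem treeDecomposition_lca {V ι : Type} (E : V → V → Prop)
    (T : SimpleGraph ι) (hT : T.IsTree) (bags : ι → Set V)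
    (hC1 : ∀ x : V, ∃ b : ι, x ∈ bags b)
    (hC2 : ∀ x y : V, E x y → ∃ b : ι, x ∈ bags b ∧ y ∈ bags b)
    (hC3 : ∀ x : V, (T.induce {b : ι | x ∈ bags b}).Connected)
    (r : ι) {u v : V} (Bu Bv L : ι)
    (hBu : u ∈ bags Bu) (hBuMin : ∀ b : ι, u ∈ bags b → T.dist Bu r ≤ T.dist b r)
    (hBv : v ∈ bags Bv) (hBvMin : ∀ b : ι, v ∈ bags b → T.dist Bv r ≤ T.dist b r)
    (hLu : IsAncestor T r L Bu) (hLv : IsAncestor T r L Bv)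
    (hLMax : ∀ L' : ι, IsAncestor T r L' Bu → IsAncestor T r L' Bv →
      T.dist L' r ≤ T.dist L r)
    {l : List V} (hP : EPath E u v l) :
    ∃ z ∈ l, z ∈ bags L :=
  treeDecomposition_lca_general E T hT bags hC2 hC3 r Bu Bv L hBu hBv hLu hLv hLMax hP
end
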